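/- Under the trajectory distribution induced by any recommendation strategy g^ai, for every time t ≤ T and every history realization h_t of positive probability, the internal state and the system state are conditionally independent given the history: for all s ∈ 𝒮 and x ∈ 𝒳, P(S_t = s, X_t = x | H_t = h_t) = P(S_t = s | H_t = h_t) · P(X_t = x | H_t = h_t) = b_t^s(s) · b_t^x(x). -/

import Mathlib

open scoped ENNReal

noncomputable section

namespace CPHS

variable {𝒳 𝒮 𝒴 𝒰 𝒲 𝒵 𝒩 : Type}

/-- i.i.d. product PMF on vectors of length `n`. -/
def pmfVec {α : Type} (p : PMF α) : (n : ℕ) → PMF (Fin n → α)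
  | 0 => PMF.pure Fin.elim0
  | n + 1 => (pmfVec p n).bind fun v => p.map fun a => Fin.snoc v a

/-- Safe getter for a vector of length `m + 1`. -/
def vget {α : Type} {m : ℕ} (v : Fin (m + 1) → α) (t : ℕ) : α :=
  v ⟨t % (m + 1), Nat.mod_lt _ (Nat.succ_pos m)⟩

/-- History at time `t`: observations `Y_{0:t}` and past actions `U^h_{0:t-1}`, `U^ai_{0:t-1}`. -/
def Hist (𝒴 𝒰 : Type) (t : ℕ) : Type :=
  (Fin (t + 1) → 𝒴) × (Fin t → 𝒰) × (Fin t → 𝒰)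

/-- Extension of a history by one step. -/
def Hist.ext {t : ℕ} (h : Hist 𝒴 𝒰 t) (y : 𝒴) (uh uai : 𝒰) : Hist 𝒴 𝒰 (t + 1) :=
  (Fin.snoc h.1 y, Fin.snoc h.2.1 uh, Fin.snoc h.2.2 uai)

/-- A recommendation strategy of the AI platform. -/
def Strat (𝒴 𝒰 : Type) : Type := (t : ℕ) → Hist 𝒴 𝒰 t → 𝒰

/-- The human–AI system model. -/
structure System (𝒳 𝒮 𝒴 𝒰 𝒲 𝒵 𝒩 : Type) where
  T : ℕ
  pX0 : PMF 𝒳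
  pS0 : PMF 𝒮
  pW : PMF 𝒲
  pZ : PMF 𝒵
  pN : PMF 𝒩
  f : 𝒳 → 𝒰 → 𝒲 → 𝒳
  o : 𝒳 → 𝒵 → 𝒴
  fh : 𝒮 → 𝒰 → 𝒴 → 𝒩 → 𝒮
  gh : 𝒮 → 𝒰 → 𝒰

namespace System

variable (M : System 𝒳 𝒮 𝒴 𝒰 𝒲 𝒵 𝒩)

/-- Primitive sample space: initial states and all noises. -/
abbrev Ω : Type :=
  𝒳 × 𝒮 × (Fin (M.T + 1) → 𝒲) × (Fin (M.T + 1) → 𝒵) × (Fin (M.T + 1) → 𝒩)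

/-- Joint PMF of the mutually independent primitive random variables. -/
def pΩ : PMF M.Ω :=
  M.pX0.bind fun x => M.pS0.bind fun s =>
    (pmfVec M.pW (M.T + 1)).bind fun w =>
      (pmfVec M.pZ (M.T + 1)).bind fun z =>
        (pmfVec M.pN (M.T + 1)).map fun n => (x, s, w, z, n)

/-- Trajectory `(X_t, S_t, H_t)` generated by strategy `g` from primitive randomness `ω`. -/
def traj (g : Strat 𝒴 𝒰) (ω : M.Ω) : (t : ℕ) → 𝒳 × 𝒮 × Hist 𝒴 𝒰 t
  | 0 => (ω.1, ω.2.1, (fun _ => M.o ω.1 (vget ω.2.2.2.1 0), Fin.elim0, Fin.elim0))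
  | t + 1 =>
      let p : 𝒳 × 𝒮 × Hist 𝒴 𝒰 t := traj g ω t
      let uai := g t p.2.2
      let uh := M.gh p.2.1 uai
      let x' := M.f p.1 uh (vget ω.2.2.1 t)
      let y' := M.o x' (vget ω.2.2.2.1 (t + 1))
      let s' := M.fh p.2.1 uai y' (vget ω.2.2.2.2 t)
      (x', s', Hist.ext p.2.2 y' uh uai)

/-- System state process. -/
def X (g : Strat 𝒴 𝒰) (ω : M.Ω) (t : ℕ) : 𝒳 := (M.traj g ω t).1
/-- Internal state process. -/
def S (g : Strat 𝒴 𝒰) (ω : M.Ω) (t : ℕ) : 𝒮 := (M.traj g ω t).2.1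
/-- History process. -/
def H (g : Strat 𝒴 𝒰) (ω : M.Ω) (t : ℕ) : Hist 𝒴 𝒰 t := (M.traj g ω t).2.2
/-- Observation process. -/
def Y (g : Strat 𝒴 𝒰) (ω : M.Ω) (t : ℕ) : 𝒴 := (M.H g ω t).1 (Fin.last t)
/-- AI recommendation process. -/
def Uai (g : Strat 𝒴 𝒰) (ω : M.Ω) (t : ℕ) : 𝒰 := g t (M.H g ω t)
/-- Human action process. -/
def Uh (g : Strat 𝒴 𝒰) (ω : M.Ω) (t : ℕ) : 𝒰 := M.gh (M.S g ω t) (M.Uai g ω t)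

/-- Probability of an event about the trajectory. -/
def pr (A : Set M.Ω) : ℝ := (M.pΩ.toOuterMeasure A).toReal

/-- Conditional probability `P(A | B)`. -/
def cpr (A B : Set M.Ω) : ℝ := M.pr (A ∩ B) / M.pr B

/-- Observation kernel `P(y | x')`. -/
def Po (y : 𝒴) (x' : 𝒳) : ℝ := (M.pZ.toOuterMeasure {z | M.o x' z = y}).toReal
/-- Transition kernel `P(x' | x, u)`. -/
def Pt (x' x : 𝒳) (u : 𝒰) : ℝ := (M.pW.toOuterMeasure {w | M.f x u w = x'}).toReal
/-- Internal-state kernel `P^h(s' | s, u, y)`. -/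
def Pn (s' s : 𝒮) (u : 𝒰) (y : 𝒴) : ℝ := (M.pN.toOuterMeasure {n | M.fh s u y n = s'}).toReal

/-- AI belief on the internal state, `b_t^s`. -/
def bS (g : Strat 𝒴 𝒰) {t : ℕ} (h : Hist 𝒴 𝒰 t) (s : 𝒮) : ℝ :=
  M.cpr {ω | M.S g ω t = s} {ω | M.H g ω t = h}

/-- AI belief on the system state, `b_t^x`. -/
def bX (g : Strat 𝒴 𝒰) {t : ℕ} (h : Hist 𝒴 𝒰 t) (x : 𝒳) : ℝ :=
  M.cpr {ω | M.X g ω t = x} {ω | M.H g ω t = h}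

/-- Conditional expectation `E[φ | B]`. -/
def cexp [Fintype 𝒳] [Fintype 𝒮] [Fintype 𝒲] [Fintype 𝒵] [Fintype 𝒩]
    (B : Set M.Ω) (φ : M.Ω → ℝ) : ℝ :=
  (∑ ω : M.Ω, Set.indicator B φ ω * (M.pΩ ω).toReal) / M.pr B

/-- Expected total discounted reward of a strategy. -/
def J [Fintype 𝒳] [Fintype 𝒮] [Fintype 𝒲] [Fintype 𝒵] [Fintype 𝒩]
    (g : Strat 𝒴 𝒰) (r : 𝒳 → 𝒰 → ℝ) (γ : ℝ) : ℝ :=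
  ∑ t ∈ Finset.range (M.T + 1), γ ^ t *
    ∑ ω : M.Ω, (M.pΩ ω).toReal * r (M.X g ω t) (M.Uh g ω t)


open Classical in
/-- The human's true conditional action distribution `P(U_t^h = u | h_t, u^ai)`. -/
def actDist [Fintype 𝒮] (g : Strat 𝒴 𝒰) {t : ℕ} (h : Hist 𝒴 𝒰 t) (uai u : 𝒰) : ℝ :=
  ∑ s, (if u = M.gh s uai then (1 : ℝ) else 0) * M.bS g h s

open Classical in
/-- One-step Bellman operator on histories, using the beliefs `b_t^s, b_t^x`. -/
def Qstep [Fintype 𝒳] [Fintype 𝒮] [Fintype 𝒴] [Fintype 𝒰]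
    (g : Strat 𝒴 𝒰) (r : 𝒳 → 𝒰 → ℝ) (γ : ℝ) {t : ℕ} (h : Hist 𝒴 𝒰 t) (u : 𝒰)
    (Vnext : Hist 𝒴 𝒰 (t + 1) → ℝ) : ℝ :=
  (∑ x, ∑ s, r x (M.gh s u) * M.bX g h x * M.bS g h s) +
    γ * ∑ y' : 𝒴, ∑ uh : 𝒰,
      (∑ s, (if uh = M.gh s u then (1 : ℝ) else 0) * M.bS g h s) *
        (∑ x', ∑ x, M.Po y' x' * M.Pt x' x uh * M.bX g h x) * Vnext (h.ext y' uh u)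

/-- Backward value recursion on histories; `n` is the number of remaining stages,
so that `V̄_t = Vbar (T + 1 - t) t` and `V̄_{T+1} ≡ 0`. -/
def Vbar [Fintype 𝒳] [Fintype 𝒮] [Fintype 𝒴] [Fintype 𝒰] [Nonempty 𝒰]
    (g : Strat 𝒴 𝒰) (r : 𝒳 → 𝒰 → ℝ) (γ : ℝ) : (n : ℕ) → (t : ℕ) → Hist 𝒴 𝒰 t → ℝ
  | 0, _, _ => 0
  | n + 1, t, h =>
      Finset.univ.sup' Finset.univ_nonempty fun u =>
        M.Qstep g r γ h u (Vbar g r γ n (t + 1))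

/-- `Q̄_t(h_t, u)`, defined through `V̄_{t+1}`. -/
def Qbar [Fintype 𝒳] [Fintype 𝒮] [Fintype 𝒴] [Fintype 𝒰] [Nonempty 𝒰]
    (g : Strat 𝒴 𝒰) (r : 𝒳 → 𝒰 → ℝ) (γ : ℝ) (t : ℕ) (h : Hist 𝒴 𝒰 t) (u : 𝒰) : ℝ :=
  M.Qstep g r γ h u (M.Vbar g r γ (M.T - t) (t + 1))

/-- `V̄_t(h_t) = max_u Q̄_t(h_t, u)`. -/
def VbarT [Fintype 𝒳] [Fintype 𝒮] [Fintype 𝒴] [Fintype 𝒰] [Nonempty 𝒰]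
    (g : Strat 𝒴 𝒰) (r : 𝒳 → 𝒰 → ℝ) (γ : ℝ) (t : ℕ) (h : Hist 𝒴 𝒰 t) : ℝ :=
  M.Vbar g r γ (M.T + 1 - t) t h

/-- Bayes-filter update `ψ^x` of the system-state belief. -/
def bayesX [Fintype 𝒳] (b : 𝒳 → ℝ) (uh : 𝒰) (y : 𝒴) : 𝒳 → ℝ := fun x' =>
  (∑ x, M.Po y x' * M.Pt x' x uh * b x) /
    (∑ x'', ∑ x, M.Po y x'' * M.Pt x'' x uh * b x)

/-- One-step Bellman operator of the approximate human model on `Sh × Δ(𝒳)`. -/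
def Qhatstep {Sh : Type} [Fintype 𝒳] [Fintype 𝒴] [Fintype 𝒰]
    (μhat : Sh → 𝒰 → PMF 𝒰) (ψhat : Sh → 𝒰 → 𝒴 → Sh) (r : 𝒳 → 𝒰 → ℝ) (γ : ℝ)
    (π : Sh × (𝒳 → ℝ)) (u : 𝒰) (Vnext : Sh × (𝒳 → ℝ) → ℝ) : ℝ :=
  (∑ x, ∑ uh, r x uh * π.2 x * (μhat π.1 u uh).toReal) +
    γ * ∑ y' : 𝒴, ∑ uh : 𝒰, (μhat π.1 u uh).toReal *
      (∑ x', ∑ x, M.Po y' x' * M.Pt x' x uh * π.2 x) *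
      Vnext (ψhat π.1 u y', M.bayesX π.2 uh y')

/-- Approximate value recursion; `n` is the number of remaining stages, so that
`V̂_t = Vhat (T + 1 - t)` and `V̂_{T+1} ≡ 0`. -/
def Vhat {Sh : Type} [Fintype 𝒳] [Fintype 𝒴] [Fintype 𝒰] [Nonempty 𝒰]
    (μhat : Sh → 𝒰 → PMF 𝒰) (ψhat : Sh → 𝒰 → 𝒴 → Sh) (r : 𝒳 → 𝒰 → ℝ) (γ : ℝ) :
    (n : ℕ) → Sh × (𝒳 → ℝ) → ℝ
  | 0, _ => 0
  | n + 1, π =>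
      Finset.univ.sup' Finset.univ_nonempty fun u =>
        M.Qhatstep μhat ψhat r γ π u (Vhat μhat ψhat r γ n)

/-- `Q̂_t(π̂, u)`, defined through `V̂_{t+1}`. -/
def Qhat {Sh : Type} [Fintype 𝒳] [Fintype 𝒴] [Fintype 𝒰] [Nonempty 𝒰]
    (μhat : Sh → 𝒰 → PMF 𝒰) (ψhat : Sh → 𝒰 → 𝒴 → Sh) (r : 𝒳 → 𝒰 → ℝ) (γ : ℝ)
    (t : ℕ) (π : Sh × (𝒳 → ℝ)) (u : 𝒰) : ℝ :=
  M.Qhatstep μhat ψhat r γ π u (M.Vhat μhat ψhat r γ (M.T - t))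

end System

/-- Total variation distance between two distributions on a finite type,
given as real-valued mass functions. -/
def tv {α : Type} [Fintype α] (p q : α → ℝ) : ℝ := (1 / 2) * ∑ a, |p a - q a|

/-!
On the event `H_t = h_t` every action is read off `h_t`, so the system state evolves from
`(X₀, W)` and produces the observations through `Z` without reference to the human, while the
internal state evolves from `(S₀, N)` driven by the recommendations and observations recorded
in `h_t`. By induction on `t`, `{H_t = h_t}` is therefore a rectangle in
`(X₀, W, Z) × (S₀, N)` on which `X_t` depends only on the first factor and `S_t` only on the
second. These two groups of primitive variables are independent, so every probability in
question is a product, and the identity becomes `a'b'/(ab) = (ab'/(ab)) (a'b/(ab))`.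
-/

theorem _root_.PMF.toOuterMeasure_bind_map_prodMk_prod {α β : Type*} (p : PMF α) (q : PMF β)
    (A : Set α) (B : Set β) :
    (p.bind fun a => q.map (Prod.mk a)).toOuterMeasure (A ×ˢ B)
      = p.toOuterMeasure A * q.toOuterMeasure B := by
  classical
  simp only [PMF.toOuterMeasure_bind_apply, PMF.toOuterMeasure_map_apply,
    Set.mk_preimage_prod_right_eq_if]
  rw [PMF.toOuterMeasure_apply, ← ENNReal.tsum_mul_right]
  refine tsum_congr fun a => ?_
  by_cases ha : a ∈ A <;> simp [ha]

theorem _root_.Fin.snoc_eq_iff {α : Type*} {n : ℕ} (p : Fin n → α) (x : α)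
    (q : Fin (n + 1) → α) : Fin.snoc p x = q ↔ p = Fin.init q ∧ x = q (Fin.last n) := by
  constructor
  · rintro rfl
    simp
  · rintro ⟨rfl, rfl⟩
    exact Fin.snoc_init_self q

def Hist.prefix {t : ℕ} (h : Hist 𝒴 𝒰 (t + 1)) : Hist 𝒴 𝒰 t :=
  (Fin.init h.1, Fin.init h.2.1, Fin.init h.2.2)

theorem Hist.ext_eq_iff {t : ℕ} (p : Hist 𝒴 𝒰 t) (y : 𝒴) (uh uai : 𝒰) (h : Hist 𝒴 𝒰 (t + 1)) :
    p.ext y uh uai = h ↔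
      p = h.prefix ∧ y = h.1 (Fin.last (t + 1)) ∧ uh = h.2.1 (Fin.last t) ∧
        uai = h.2.2 (Fin.last t) := by
  obtain ⟨p₁, p₂, p₃⟩ := p
  obtain ⟨h₁, h₂, h₃⟩ := h
  change (Fin.snoc p₁ y, Fin.snoc p₂ uh, Fin.snoc p₃ uai) = (h₁, h₂, h₃) ↔
    (p₁, p₂, p₃) = (Fin.init h₁, Fin.init h₂, Fin.init h₃) ∧ _
  simp only [Prod.mk.injEq, Fin.snoc_eq_iff]
  tauto

namespace System
variable (M : System 𝒳 𝒮 𝒴 𝒰 𝒲 𝒵 𝒩)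

abbrev ΩX : Type := 𝒳 × (Fin (M.T + 1) → 𝒲) × (Fin (M.T + 1) → 𝒵)
abbrev ΩS : Type := 𝒮 × (Fin (M.T + 1) → 𝒩)

def split (ω : M.Ω) : M.ΩX × M.ΩS := ((ω.1, ω.2.2.1, ω.2.2.2.1), (ω.2.1, ω.2.2.2.2))

def pΩX : PMF M.ΩX :=
  M.pX0.bind fun x => (pmfVec M.pW (M.T + 1)).bind fun w =>
    (pmfVec M.pZ (M.T + 1)).map fun z => (x, w, z)

def pΩS : PMF M.ΩS :=
  M.pS0.bind fun s => (pmfVec M.pN (M.T + 1)).map fun n => (s, n)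

theorem pΩ_map_split : M.pΩ.map M.split = M.pΩX.bind fun a => M.pΩS.map (Prod.mk a) := by
  simp only [pΩ, pΩX, pΩS, PMF.map_bind, PMF.bind_map, PMF.bind_bind, PMF.map_comp]
  refine congrArg M.pX0.bind (funext fun x => ?_)
  rw [PMF.bind_comm M.pS0]
  refine congrArg _ (funext fun w => ?_)
  rw [PMF.bind_comm M.pS0]
  rfl

theorem pr_split_preimage_prod (A : Set M.ΩX) (B : Set M.ΩS) :
    M.pr (M.split ⁻¹' (A ×ˢ B))
      = (M.pΩX.toOuterMeasure A).toReal * (M.pΩS.toOuterMeasure B).toReal := by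
  rw [pr, ← PMF.toOuterMeasure_map_apply, pΩ_map_split,
    PMF.toOuterMeasure_bind_map_prodMk_prod, ENNReal.toReal_mul]

variable (g : Strat 𝒴 𝒰) (ω : M.Ω) (t : ℕ)

theorem X_succ : M.X g ω (t + 1) = M.f (M.X g ω t) (M.Uh g ω t) (vget ω.2.2.1 t) := rfl

theorem S_succ : M.S g ω (t + 1) =
    M.fh (M.S g ω t) (M.Uai g ω t) (M.o (M.X g ω (t + 1)) (vget ω.2.2.2.1 (t + 1)))
      (vget ω.2.2.2.2 t) := rfl

theorem H_succ : M.H g ω (t + 1) =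
    (M.H g ω t).ext (M.o (M.X g ω (t + 1)) (vget ω.2.2.2.1 (t + 1))) (M.Uh g ω t)
      (M.Uai g ω t) := rfl

structure HistFactorization (h : Hist 𝒴 𝒰 t) where
  A : Set M.ΩX
  B : Set M.ΩS
  ξ : M.ΩX → 𝒳
  σ : M.ΩS → 𝒮
  H_eq_iff : ∀ ω, M.H g ω t = h ↔ M.split ω ∈ A ×ˢ B
  X_eq : ∀ ω, M.H g ω t = h → M.X g ω t = ξ (M.split ω).1
  S_eq : ∀ ω, M.H g ω t = h → M.S g ω t = σ (M.split ω).2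

variable {M g t}

def HistFactorization.zero (h : Hist 𝒴 𝒰 0) : M.HistFactorization g 0 h where
  A := {a | ((fun _ => M.o a.1 (vget a.2.2 0)), Fin.elim0, Fin.elim0) = h}
  B := Set.univ
  ξ a := a.1
  σ b := b.1
  H_eq_iff _ := ⟨fun hω => ⟨hω, trivial⟩, fun hω => hω.1⟩
  X_eq _ _ := rfl
  S_eq _ _ := rfl

def HistFactorization.succ {h : Hist 𝒴 𝒰 (t + 1)} (F : M.HistFactorization g t h.prefix) :
    M.HistFactorization g (t + 1) h where
  A := {a ∈ F.A | M.o (M.f (F.ξ a) (h.2.1 (Fin.last t)) (vget a.2.1 t)) (vget a.2.2 (t + 1))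
    = h.1 (Fin.last (t + 1))}
  B := {b ∈ F.B | M.gh (F.σ b) (g t h.prefix) = h.2.1 (Fin.last t) ∧
    g t h.prefix = h.2.2 (Fin.last t)}
  ξ a := M.f (F.ξ a) (h.2.1 (Fin.last t)) (vget a.2.1 t)
  σ b := M.fh (F.σ b) (g t h.prefix) (h.1 (Fin.last (t + 1))) (vget b.2 t)
  H_eq_iff ω := by
    rw [H_succ, Hist.ext_eq_iff]
    by_cases hp : M.H g ω t = h.prefix
    · obtain ⟨hA, hB⟩ := (F.H_eq_iff ω).1 hp
      simp only [Set.mem_prod, Set.mem_sep_iff, X_succ, Uh, Uai, hp, F.X_eq ω hp, F.S_eq ω hp,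
        hA, hB, true_and]
      constructor
      · rintro ⟨hy, huh, hua⟩
        exact ⟨huh ▸ hy, huh, hua⟩
      · rintro ⟨hy, huh, hua⟩
        exact ⟨huh.symm ▸ hy, huh, hua⟩
    · refine iff_of_false (fun hω => hp hω.1) fun hω => hp ((F.H_eq_iff ω).2 ?_)
      exact ⟨hω.1.1, hω.2.1⟩
  X_eq ω hω := by
    rw [H_succ, Hist.ext_eq_iff] at hω
    obtain ⟨hp, -, huh, -⟩ := hω
    rw [X_succ, F.X_eq ω hp, huh]
    rfl
  S_eq ω hω := by
    rw [H_succ, Hist.ext_eq_iff] at hω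
    obtain ⟨hp, hy, -, -⟩ := hω
    rw [S_succ, hy, F.S_eq ω hp, Uai, hp]
    rfl

variable (M g) in
def histFactorization : (t : ℕ) → (h : Hist 𝒴 𝒰 t) → M.HistFactorization g t h
  | 0, h => .zero h
  | t + 1, h => (histFactorization t h.prefix).succ

theorem HistFactorization.inter_eq_preimage {h : Hist 𝒴 𝒰 t} (F : M.HistFactorization g t h)
    (E : Set 𝒳) (E' : Set 𝒮) :
    {ω | M.S g ω t ∈ E' ∧ M.X g ω t ∈ E} ∩ {ω | M.H g ω t = h}
      = M.split ⁻¹' ((F.A ∩ F.ξ ⁻¹' E) ×ˢ (F.B ∩ F.σ ⁻¹' E')) := by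
  ext ω
  constructor
  · rintro ⟨⟨hS, hX⟩, hω⟩
    obtain ⟨hA, hB⟩ := (F.H_eq_iff ω).1 hω
    exact ⟨⟨hA, by rwa [Set.mem_preimage, ← F.X_eq ω hω]⟩,
      hB, by rwa [Set.mem_preimage, ← F.S_eq ω hω]⟩
  · rintro ⟨⟨hA, hX⟩, hB, hS⟩
    have hω := (F.H_eq_iff ω).2 ⟨hA, hB⟩
    exact ⟨⟨by rwa [F.S_eq ω hω], by rwa [F.X_eq ω hω]⟩, hω⟩

theorem HistFactorization.pr_inter {h : Hist 𝒴 𝒰 t} (F : M.HistFactorization g t h)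
    (E : Set 𝒳) (E' : Set 𝒮) :
    M.pr ({ω | M.S g ω t ∈ E' ∧ M.X g ω t ∈ E} ∩ {ω | M.H g ω t = h})
      = (M.pΩX.toOuterMeasure (F.A ∩ F.ξ ⁻¹' E)).toReal *
          (M.pΩS.toOuterMeasure (F.B ∩ F.σ ⁻¹' E')).toReal := by
  rw [F.inter_eq_preimage, pr_split_preimage_prod]

end System

theorem mul_div_mul_eq_mul_div_mul_mul_div_mul {K : Type*} [Field K] (a a' b b' : K) :
    a' * b' / (a * b) = a * b' / (a * b) * (a' * b / (a * b)) := by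
  rcases eq_or_ne a 0 with rfl | ha
  · simp
  rcases eq_or_ne b 0 with rfl | hb
  · simp
  field_simp

theorem statement_1_general {𝒳 𝒮 𝒴 𝒰 𝒲 𝒵 𝒩 : Type}
    (M : System 𝒳 𝒮 𝒴 𝒰 𝒲 𝒵 𝒩) (g : Strat 𝒴 𝒰)
    (t : ℕ) (h : Hist 𝒴 𝒰 t) (s : 𝒮) (x : 𝒳) :
    M.cpr {ω | M.S g ω t = s ∧ M.X g ω t = x} {ω | M.H g ω t = h}
      = M.bS g h s * M.bX g h x := by
  let F := M.histFactorization g t h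
  have hSX := F.pr_inter {x} {s}
  have hS := F.pr_inter Set.univ {s}
  have hX := F.pr_inter {x} Set.univ
  have hH := F.pr_inter Set.univ Set.univ
  simp only [Set.mem_univ, and_true, true_and, Set.mem_singleton_iff, Set.preimage_univ,
    Set.inter_univ, Set.ofPred_true, Set.univ_inter] at hSX hS hX hH
  rw [System.cpr, System.bS, System.bX, System.cpr, System.cpr, hSX, hS, hX, hH]
  exact mul_div_mul_eq_mul_div_mul_mul_div_mul _ _ _ _

/-- conditional independence of the internal state and the system state
given the history. -/
theorem statement_1 {𝒳 𝒮 𝒴 𝒰 𝒲 𝒵 𝒩 : Type}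
    [Fintype 𝒳] [Fintype 𝒮] [Fintype 𝒴] [Fintype 𝒰] [Fintype 𝒲] [Fintype 𝒵] [Fintype 𝒩]
    [Nonempty 𝒳] [Nonempty 𝒮] [Nonempty 𝒴] [Nonempty 𝒰] [DecidableEq 𝒰]
    (M : System 𝒳 𝒮 𝒴 𝒰 𝒲 𝒵 𝒩) (g : Strat 𝒴 𝒰)
    (t : ℕ) (ht : t ≤ M.T) (h : Hist 𝒴 𝒰 t)
    (hpos : 0 < M.pr {ω | M.H g ω t = h}) (s : 𝒮) (x : 𝒳) :
    M.cpr {ω | M.S g ω t = s ∧ M.X g ω t = x} {ω | M.H g ω t = h}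
      = M.bS g h s * M.bX g h x :=
  statement_1_general M g t h s x

end CPHS
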